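/- arXiv:1810.10843 — 2 statements merged into one kernel-verified Lean document; each statement's English description precedes it below -/
import Mathlib

section
/- Difference of two inverse Loewner maps (inequality (2.2) of Lemma 2.3): Let t > 0, let V¹, V² : [0,t] → ℝ be continuous, and let z = x + iy ∈ ℍ (so y > 0). For j = 1, 2, let h^j : [0,t] → ℂ satisfy h^j(0) = z, h^j(s) − V^j(s) ≠ 0 and (h^j)'(s) = −2/(h^j(s) − V^j(s)) for all s ∈ [0,t] (such solutions exist on all of [0,t] since z ∈ ℍ). Then |h¹(t) − h²(t)| ≤ (sup_{s∈[0,t]} |V¹(s) − V²(s)|) · (√(4t + y²)/y − 1). Since the inverse Loewner map f^U_t(z) equals the time-t value of the reverse flow with driver s ↦ U(t−s), this is exactly the estimate |f¹_t(z) − f²_t(z)| ≤ ‖U¹ − U²‖_{∞,[0,t]} (√(4t + y²)/y − 1) for inverse Loewner maps with driving terms U¹, U². -/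
/-!
Write `w = h - V`. Since `V` is real, `Im h' = Im (-2 / w) = (2 / |w|²) Im h`, so `Im h` stays
positive and `log Im h` has derivative `2 / |w|²`; moreover `(Im h)²` grows at rate at most `4`,
whence `Im h(t) ≤ √(4t + y²)`. For two flows with `|V¹ - V²| ≤ ε`, AM-GM gives
`|(h¹ - h²)'| = 2 |w¹ - w²| / (|w¹| |w²|) ≤ (|h¹ - h²| + ε) (1/|w¹|² + 1/|w²|²)`.
The coefficient is the derivative of `C = (log Im h¹ + log Im h²) / 2`, so Grönwall's inequality
gives `|h¹(t) - h²(t)| ≤ ε (e^{C(t) - C(0)} - 1)`, and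
`e^{C(t) - C(0)} = √(Im h¹(t) Im h²(t)) / y ≤ √(4t + y²) / y`.
-/

open Set Real

theorem norm_le_mul_exp_sub_one_of_norm_deriv_right_le {E : Type*} [NormedAddCommGroup E]
    [NormedSpace ℝ E] {f f' : ℝ → E} {C c : ℝ → ℝ} {a b ε : ℝ}
    (hf : ContinuousOn f (Icc a b)) (hf' : ∀ x ∈ Ico a b, HasDerivWithinAt f (f' x) (Ici x) x)
    (hC : ContinuousOn C (Icc a b)) (hC' : ∀ x ∈ Ico a b, HasDerivWithinAt C (c x) (Ici x) x)
    (hc : ∀ x ∈ Ico a b, 0 < c x) (ha : f a = 0)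
    (bound : ∀ x ∈ Ico a b, ‖f' x‖ ≤ c x * (‖f x‖ + ε)) :
    ∀ x ∈ Icc a b, ‖f x‖ ≤ ε * (exp (C x - C a) - 1) := by
  intro x hx
  -- For `ε' > ε` the barrier `ε' (e^{C - C a} - 1)` is met with a strict inequality; let `ε' → ε`.
  have above : ∀ ε' ∈ Ioi ε, ‖f x‖ ≤ ε' * (exp (C x - C a) - 1) := by
    intro ε' hε'
    refine image_norm_le_of_norm_deriv_right_lt_deriv_boundary'
      (B := fun u => ε' * (exp (C u - C a) - 1)) hf hf' (by simp [ha])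
      (continuousOn_const.mul (((hC.sub continuousOn_const).rexp).sub continuousOn_const))
      (fun u hu => (((hC' u hu).sub_const (C a)).exp.sub_const 1).const_mul ε') ?_ hx
    intro u hu hfu
    calc ‖f' u‖ ≤ c u * (‖f u‖ + ε) := bound u hu
      _ < c u * (ε' * exp (C u - C a)) := by
        rw [hfu]; exact mul_lt_mul_of_pos_left (by linarith [mem_Ioi.1 hε']) (hc u hu)
      _ = ε' * (exp (C u - C a) * c u) := by ring
  have hlim : Filter.Tendsto (fun ε' => ε' * (exp (C x - C a) - 1)) (nhdsWithin ε (Ioi ε))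
      (nhds (ε * (exp (C x - C a) - 1))) :=
    ((continuous_mul_const _).tendsto ε).mono_left nhdsWithin_le_nhds
  exact ge_of_tendsto hlim (eventually_nhdsWithin_of_forall above)

namespace Complex

theorem im_neg_two_div (w : ℂ) : (-2 / w).im = 2 / ‖w‖ ^ 2 * w.im := by
  rw [div_im, normSq_eq_norm_sq]
  simp
  ring

theorem norm_neg_two_div_sub_neg_two_div_le {w₁ w₂ : ℂ} (hw₁ : w₁ ≠ 0) (hw₂ : w₂ ≠ 0) :
    ‖-2 / w₁ - -2 / w₂‖ ≤ (2 / ‖w₁‖ ^ 2 + 2 / ‖w₂‖ ^ 2) / 2 * ‖w₁ - w₂‖ := by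
  have hn₁ : 0 < ‖w₁‖ := norm_pos_iff.2 hw₁
  have hn₂ : 0 < ‖w₂‖ := norm_pos_iff.2 hw₂
  have hdiff : -2 / w₁ - -2 / w₂ = 2 * (w₁ - w₂) / (w₁ * w₂) := by field_simp; ring
  have amgm : 2 / (‖w₁‖ * ‖w₂‖) ≤ (2 / ‖w₁‖ ^ 2 + 2 / ‖w₂‖ ^ 2) / 2 := by
    rw [div_add_div _ _ (by positivity) (by positivity), div_div,
      div_le_div_iff₀ (by positivity) (by positivity)]
    nlinarith [mul_nonneg (mul_pos hn₁ hn₂).le (sq_nonneg (‖w₁‖ - ‖w₂‖))]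
  calc ‖-2 / w₁ - -2 / w₂‖ = 2 / (‖w₁‖ * ‖w₂‖) * ‖w₁ - w₂‖ := by
        rw [hdiff, norm_div, norm_mul, norm_mul]; simp; ring
    _ ≤ _ := by gcongr

theorem norm_neg_two_div_sub_le {a₁ a₂ : ℂ} {v₁ v₂ ε : ℝ} (h₁ : a₁ - v₁ ≠ 0)
    (h₂ : a₂ - v₂ ≠ 0) (hv : |v₁ - v₂| ≤ ε) :
    ‖-2 / (a₁ - v₁) - -2 / (a₂ - v₂)‖ ≤
      (2 / ‖a₁ - v₁‖ ^ 2 + 2 / ‖a₂ - v₂‖ ^ 2) / 2 * (‖a₁ - a₂‖ + ε) := by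
  refine (norm_neg_two_div_sub_neg_two_div_le h₁ h₂).trans ?_
  gcongr
  calc ‖(a₁ - v₁) - (a₂ - v₂)‖ = ‖(a₁ - a₂) - ((v₁ - v₂ : ℝ) : ℂ)‖ := by push_cast; ring_nf
    _ ≤ ‖a₁ - a₂‖ + |v₁ - v₂| :=
      (norm_sub_le _ _).trans_eq (by rw [norm_real, Real.norm_eq_abs])
    _ ≤ ‖a₁ - a₂‖ + ε := by gcongr

end Complex

def IsReverseLoewnerFlow (V : ℝ → ℝ) (t : ℝ) (h : ℝ → ℂ) : Prop :=
  ∀ s ∈ Icc (0 : ℝ) t, h s - (V s : ℂ) ≠ 0 ∧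
    HasDerivWithinAt h (-2 / (h s - (V s : ℂ))) (Icc 0 t) s

namespace IsReverseLoewnerFlow

variable {V : ℝ → ℝ} {t : ℝ} {h : ℝ → ℂ}

theorem continuousOn (hh : IsReverseLoewnerFlow V t h) : ContinuousOn h (Icc 0 t) :=
  fun s hs => (hh s hs).2.continuousWithinAt

theorem continuousOn_im (hh : IsReverseLoewnerFlow V t h) :
    ContinuousOn (fun s => (h s).im) (Icc 0 t) :=
  Complex.continuous_im.comp_continuousOn hh.continuousOn

theorem hasDerivWithinAt_im (hh : IsReverseLoewnerFlow V t h) {s : ℝ} (hs : s ∈ Icc 0 t) :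
    HasDerivWithinAt (fun u => (h u).im) (2 / ‖h s - (V s : ℂ)‖ ^ 2 * (h s).im) (Icc 0 t) s := by
  have him := Complex.imCLM.hasFDerivAt.comp_hasDerivWithinAt s (hh s hs).2
  rwa [Complex.imCLM_apply, Complex.im_neg_two_div, Complex.sub_im, Complex.ofReal_im,
    sub_zero] at him

theorem im_pos (hh : IsReverseLoewnerFlow V t h) (h0 : 0 < (h 0).im) :
    ∀ s ∈ Icc 0 t, 0 < (h s).im := by
  intro s hs
  have hle : -(h s).im ≤ -((h 0).im / 2) :=
    image_le_of_deriv_right_lt_deriv_boundary' (f := fun u => -(h u).im) (B' := 0)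
      hh.continuousOn_im.neg
      (fun u hu => (hh.hasDerivWithinAt_im (Ico_subset_Icc_self hu)).neg.mono_of_mem_nhdsWithin
        (Icc_mem_nhdsGE_of_mem hu))
      (by linarith) continuousOn_const (fun u _ => hasDerivWithinAt_const _ _ _)
      (fun u hu hu_eq => by
        have hw := norm_pos_iff.2 (hh u (Ico_subset_Icc_self hu)).1
        have hu_im : (h u).im = (h 0).im / 2 := neg_inj.1 hu_eq
        simp only [Pi.zero_apply, neg_lt_zero, hu_im]
        positivity) hs
  linarith

theorem hasDerivWithinAt_log_im (hh : IsReverseLoewnerFlow V t h) (h0 : 0 < (h 0).im) {s : ℝ}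
    (hs : s ∈ Icc 0 t) :
    HasDerivWithinAt (fun u => log (h u).im) (2 / ‖h s - (V s : ℂ)‖ ^ 2) (Icc 0 t) s := by
  have hd := (hh.hasDerivWithinAt_im hs).log (hh.im_pos h0 s hs).ne'
  rwa [mul_div_cancel_right₀ _ (hh.im_pos h0 s hs).ne'] at hd

theorem im_le_sqrt (hh : IsReverseLoewnerFlow V t h) :
    ∀ s ∈ Icc 0 t, (h s).im ≤ √(4 * s + (h 0).im ^ 2) := by
  intro s hs
  have hsq : (h s).im ^ 2 ≤ 4 * s + (h 0).im ^ 2 :=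
    image_le_of_deriv_right_le_deriv_boundary (B := fun u => 4 * u + (h 0).im ^ 2)
      (B' := fun _ => 4) (hh.continuousOn_im.pow 2)
      (fun u hu => ((hh.hasDerivWithinAt_im (Ico_subset_Icc_self hu)).pow 2).mono_of_mem_nhdsWithin
        (Icc_mem_nhdsGE_of_mem hu))
      (by simp) (by fun_prop)
      (fun u _ => ((hasDerivAt_id u).const_mul 4 |>.add_const _).hasDerivWithinAt.congr_deriv
        (by simp))
      (fun u _ => by
        set w := h u - (V u : ℂ)
        have hwim : w.im = (h u).im := by simp [w]
        have him : (h u).im ^ 2 ≤ ‖w‖ ^ 2 := by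
          rw [← hwim, ← sq_abs]
          exact pow_le_pow_left₀ (abs_nonneg _) (Complex.abs_im_le_norm w) 2
        calc (2 : ℕ) * (h u).im ^ (2 - 1) * (2 / ‖w‖ ^ 2 * (h u).im)
            = 4 * ((h u).im ^ 2 / ‖w‖ ^ 2) := by ring
          _ ≤ 4 * 1 := by gcongr; exact div_le_one_of_le₀ him (by positivity)
          _ = 4 := by ring) hs
  exact (le_abs_self _).trans (abs_le_sqrt hsq)

theorem log_im_sub_le (hh : IsReverseLoewnerFlow V t h) (h0 : 0 < (h 0).im) (ht : 0 ≤ t) :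
    log (h t).im - log (h 0).im ≤ log (√(4 * t + (h 0).im ^ 2) / (h 0).im) := by
  rw [Real.log_div (by positivity) h0.ne']
  gcongr
  exacts [hh.im_pos h0 t (right_mem_Icc.2 ht), hh.im_le_sqrt t (right_mem_Icc.2 ht)]

theorem norm_sub_le {V₁ V₂ : ℝ → ℝ} {h₁ h₂ : ℝ → ℂ} {ε : ℝ}
    (hh₁ : IsReverseLoewnerFlow V₁ t h₁) (hh₂ : IsReverseLoewnerFlow V₂ t h₂) (ht : 0 ≤ t)
    (h0 : h₁ 0 = h₂ 0) (him : 0 < (h₁ 0).im) (hV : ∀ s ∈ Icc 0 t, |V₁ s - V₂ s| ≤ ε) :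
    ‖h₁ t - h₂ t‖ ≤ ε * (√(4 * t + (h₁ 0).im ^ 2) / (h₁ 0).im - 1) := by
  have him₂ : 0 < (h₂ 0).im := h0 ▸ him
  set C : ℝ → ℝ := fun s => (log (h₁ s).im + log (h₂ s).im) / 2
  have hC : ContinuousOn C (Icc 0 t) :=
    ((hh₁.continuousOn_im.log fun s hs => (hh₁.im_pos him s hs).ne').add
      (hh₂.continuousOn_im.log fun s hs => (hh₂.im_pos him₂ s hs).ne')).div_const 2
  have gronwall := norm_le_mul_exp_sub_one_of_norm_deriv_right_le
    (f := fun s => h₁ s - h₂ s) (C := C)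
    (c := fun s => (2 / ‖h₁ s - (V₁ s : ℂ)‖ ^ 2 + 2 / ‖h₂ s - (V₂ s : ℂ)‖ ^ 2) / 2)
    (hh₁.continuousOn.sub hh₂.continuousOn)
    (fun s hs => ((hh₁ s (Ico_subset_Icc_self hs)).2.sub
      (hh₂ s (Ico_subset_Icc_self hs)).2).mono_of_mem_nhdsWithin (Icc_mem_nhdsGE_of_mem hs))
    hC
    (fun s hs => (((hh₁.hasDerivWithinAt_log_im him (Ico_subset_Icc_self hs)).add
      (hh₂.hasDerivWithinAt_log_im him₂ (Ico_subset_Icc_self hs))).div_const 2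
        ).mono_of_mem_nhdsWithin (Icc_mem_nhdsGE_of_mem hs))
    (fun s hs => by
      have := norm_pos_iff.2 (hh₁ s (Ico_subset_Icc_self hs)).1
      have := norm_pos_iff.2 (hh₂ s (Ico_subset_Icc_self hs)).1
      positivity)
    (sub_eq_zero.2 h0)
    (fun s hs => Complex.norm_neg_two_div_sub_le (hh₁ s (Ico_subset_Icc_self hs)).1
      (hh₂ s (Ico_subset_Icc_self hs)).1 (hV s (Ico_subset_Icc_self hs)))
    t (right_mem_Icc.2 ht)
  have hexp : exp (C t - C 0) ≤ √(4 * t + (h₁ 0).im ^ 2) / (h₁ 0).im := by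
    have h₁t := hh₁.log_im_sub_le him ht
    have h₂t := hh₂.log_im_sub_le him₂ ht
    rw [← h0] at h₂t
    calc exp (C t - C 0) ≤ exp (log (√(4 * t + (h₁ 0).im ^ 2) / (h₁ 0).im)) := by
          gcongr; simp only [C, ← h0]; linarith
      _ = _ := exp_log (by positivity)
  have hε : 0 ≤ ε := (abs_nonneg _).trans (hV 0 (left_mem_Icc.2 ht))
  calc ‖h₁ t - h₂ t‖ ≤ ε * (exp (C t - C 0) - 1) := gronwall
    _ ≤ _ := by gcongr

end IsReverseLoewnerFlow

/-- **Difference of two inverse Loewner maps (inequality (2.2) of Lemma 2.3).**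
If `h¹, h²` solve the reverse Loewner equation on `[0,t]` with continuous drivers
`V¹, V²` and common initial value `z = x + iy ∈ ℍ`, then
`|h¹(t) - h²(t)| ≤ (sup_{s∈[0,t]} |V¹ s - V² s|) (√(4t + y²)/y - 1)`. -/
theorem stmt3 (t : ℝ) (ht : 0 < t) (V₁ V₂ : ℝ → ℝ)
    (hV₁ : ContinuousOn V₁ (Set.Icc 0 t)) (hV₂ : ContinuousOn V₂ (Set.Icc 0 t))
    (x y : ℝ) (hy : 0 < y) (z : ℂ) (hz : z = x + y * Complex.I)
    (h₁ h₂ : ℝ → ℂ) (h₁0 : h₁ 0 = z) (h₂0 : h₂ 0 = z)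
    (hode₁ : ∀ s ∈ Set.Icc (0 : ℝ) t, h₁ s - (V₁ s : ℂ) ≠ 0 ∧
      HasDerivWithinAt h₁ (-2 / (h₁ s - (V₁ s : ℂ))) (Set.Icc 0 t) s)
    (hode₂ : ∀ s ∈ Set.Icc (0 : ℝ) t, h₂ s - (V₂ s : ℂ) ≠ 0 ∧
      HasDerivWithinAt h₂ (-2 / (h₂ s - (V₂ s : ℂ))) (Set.Icc 0 t) s) :
    ‖h₁ t - h₂ t‖ ≤
      (⨆ s : Set.Icc (0 : ℝ) t, |V₁ s - V₂ s|) * (Real.sqrt (4 * t + y ^ 2) / y - 1) := by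
  have hy' : (h₁ 0).im = y := by simp [h₁0, hz]
  have hbdd : BddAbove (range fun s : Icc (0 : ℝ) t => |V₁ s - V₂ s|) := by
    refine (isCompact_Icc.image_of_continuousOn (hV₁.sub hV₂).abs).bddAbove.mono ?_
    rintro _ ⟨s, rfl⟩
    exact mem_image_of_mem _ s.2
  have hdiff := IsReverseLoewnerFlow.norm_sub_le hode₁ hode₂ ht.le (h₁0.trans h₂0.symm)
    (hy'.symm ▸ hy) (fun s hs => le_ciSup hbdd ⟨s, hs⟩)
  rwa [hy'] at hdiff
end

section
/- Global existence of the reverse Loewner flow started in the upper half-plane: Let V : [0,∞) → ℝ be continuous and let z ∈ ℍ = {w ∈ ℂ : Im w > 0}. Then there exists a unique function h : [0,∞) → ℂ with h(0) = z such that h(s) − V(s) ≠ 0 and h'(s) = −2/(h(s) − V(s)) for all s ≥ 0. Moreover, for this solution the function s ↦ Im h(s) is nondecreasing; in particular Im h(s) ≥ Im z > 0 for all s ≥ 0. -/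
/-!
Replace `w` by its projection `clampIm b w` onto `{Im w ≥ b}`, `b = Im z`. The truncated field
`-2 / (clampIm b w - V t)` is globally Lipschitz and bounded, so by Picard–Lindelöf its flow exists
for all time; the field has positive imaginary part, so along the flow `Im` increases, the
truncation is never active, and the flow solves the Loewner equation. Conversely, any solution
keeps `Im h ≥ b`, since where `Im h = b` its derivative `2 Im h / |h - V|²` is positive; hence it
solves the truncated equation too, whose solutions are unique.
-/

open Set Complex
open scoped NNReal

theorem monotoneOn_Ici_of_hasDerivWithinAt_nonneg {f f' : ℝ → ℝ} {a : ℝ}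
    (hf : ∀ x ∈ Ici a, HasDerivWithinAt f (f' x) (Ici a) x) (hf'₀ : ∀ x ∈ Ioi a, 0 ≤ f' x) :
    MonotoneOn f (Ici a) :=
  monotoneOn_of_hasDerivWithinAt_nonneg (convex_Ici a)
    (fun x hx => (hf x hx).continuousWithinAt)
    (fun x hx => by
      rw [interior_Ici] at hx ⊢
      exact (hf x (mem_Ici.mpr hx.le)).mono Ioi_subset_Ici_self)
    (by simpa only [interior_Ici] using hf'₀)

theorem le_image_of_deriv_right_pos_of_eq_left {f f' : ℝ → ℝ} {a : ℝ}
    (hf : ∀ x ∈ Ici a, HasDerivWithinAt f (f' x) (Ici a) x)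
    (hpos : ∀ x ∈ Ici a, f x = f a → 0 < f' x) : ∀ x ∈ Ici a, f a ≤ f x := by
  intro x hx
  have hneg := image_le_of_deriv_right_lt_deriv_boundary (f := fun y => -f y)
    (f' := fun y => -f' y) (B := fun _ => -f a) (B' := 0) (b := x)
    (fun y hy => ((hf y hy.1).continuousWithinAt.mono Icc_subset_Ici_self).neg)
    (fun y hy => ((hf y hy.1).mono (Ici_subset_Ici.mpr hy.1)).neg) le_rfl
    (fun _ => hasDerivAt_const _ _)
    (fun y hy hfy => neg_lt_zero.mpr (hpos y hy.1 (neg_inj.mp hfy))) ⟨hx, le_rfl⟩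
  exact neg_le_neg_iff.mp hneg

section ODE

variable {E : Type*} [NormedAddCommGroup E] [NormedSpace ℝ E] {v : ℝ → E → E} {K : ℝ≥0}

theorem eqOn_Icc_of_hasDerivWithinAt_of_lipschitzWith {f g : ℝ → E} {a b : ℝ}
    (hv : ∀ t ∈ Ico a b, LipschitzWith K (v t))
    (hf : ∀ t ∈ Icc a b, HasDerivWithinAt f (v t (f t)) (Icc a b) t)
    (hg : ∀ t ∈ Icc a b, HasDerivWithinAt g (v t (g t)) (Icc a b) t)
    (ha : f a = g a) : EqOn f g (Icc a b) :=
  ODE_solution_unique_of_mem_Icc_right (s := fun _ => univ)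
    (fun t ht => (hv t ht).lipschitzOnWith)
    (fun t ht => (hf t ht).continuousWithinAt)
    (fun t ht => (hf t (Ico_subset_Icc_self ht)).mono_of_mem_nhdsWithin
      (Icc_mem_nhdsGE_of_mem ht))
    (fun _ _ => mem_univ _)
    (fun t ht => (hg t ht).continuousWithinAt)
    (fun t ht => (hg t (Ico_subset_Icc_self ht)).mono_of_mem_nhdsWithin
      (Icc_mem_nhdsGE_of_mem ht))
    (fun _ _ => mem_univ _) ha

theorem eqOn_Ici_of_hasDerivWithinAt_of_lipschitzWith {f g : ℝ → E} {a : ℝ}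
    (hv : ∀ t ∈ Ici a, LipschitzWith K (v t))
    (hf : ∀ t ∈ Ici a, HasDerivWithinAt f (v t (f t)) (Ici a) t)
    (hg : ∀ t ∈ Ici a, HasDerivWithinAt g (v t (g t)) (Ici a) t)
    (ha : f a = g a) : EqOn f g (Ici a) := fun _ ht =>
  eqOn_Icc_of_hasDerivWithinAt_of_lipschitzWith (fun s hs => hv s hs.1)
    (fun s hs => (hf s hs.1).mono Icc_subset_Ici_self)
    (fun s hs => (hg s hs.1).mono Icc_subset_Ici_self) ha ⟨ht, le_rfl⟩

variable [CompleteSpace E] {L : ℝ≥0}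

theorem exists_forall_mem_Icc_hasDerivWithinAt_of_lipschitzWith
    (hv : ∀ t ∈ Ici (0 : ℝ), LipschitzWith K (v t)) (hcont : ∀ x, ContinuousOn (v · x) (Ici 0))
    (hbound : ∀ t ∈ Ici (0 : ℝ), ∀ x, ‖v t x‖ ≤ L) (x₀ : E) {c : ℝ} (hc : 0 ≤ c) :
    ∃ f : ℝ → E, f 0 = x₀ ∧ ∀ t ∈ Icc 0 c, HasDerivWithinAt f (v t (f t)) (Icc 0 c) t :=
  IsPicardLindelof.exists_eq_forall_mem_Icc_hasDerivWithinAt₀ (t₀ := ⟨0, le_rfl, hc⟩)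
    (a := L * c.toNNReal)
    { lipschitzOnWith := fun t ht => (hv t ht.1).lipschitzOnWith
      continuousOn := fun x _ => (hcont x).mono Icc_subset_Ici_self
      norm_le := fun t ht x _ => hbound t ht.1 x
      mul_max_le := by simp [hc] }

theorem exists_forall_mem_Ici_hasDerivWithinAt_of_lipschitzWith
    (hv : ∀ t ∈ Ici (0 : ℝ), LipschitzWith K (v t)) (hcont : ∀ x, ContinuousOn (v · x) (Ici 0))
    (hbound : ∀ t ∈ Ici (0 : ℝ), ∀ x, ‖v t x‖ ≤ L) (x₀ : E) :
    ∃ f : ℝ → E, f 0 = x₀ ∧ ∀ t ∈ Ici (0 : ℝ), HasDerivWithinAt f (v t (f t)) (Ici 0) t := by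
  choose α hα₀ hα using fun n : ℕ =>
    exists_forall_mem_Icc_hasDerivWithinAt_of_lipschitzWith hv hcont hbound x₀ n.cast_nonneg
  have hαα : ∀ n m : ℕ, n ≤ m → EqOn (α n) (α m) (Icc 0 n) := fun n m hnm =>
    have hsub : Icc (0 : ℝ) n ⊆ Icc 0 m := Icc_subset_Icc_right (Nat.cast_le.mpr hnm)
    eqOn_Icc_of_hasDerivWithinAt_of_lipschitzWith (fun t ht => hv t ht.1) (hα n)
      (fun t ht => (hα m t (hsub ht)).mono hsub) ((hα₀ n).trans (hα₀ m).symm)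
  set f : ℝ → E := fun s => α (⌈s⌉₊ + 1) s
  have hfα : ∀ n : ℕ, EqOn f (α n) (Icc 0 n) := by
    intro n r hr
    have hr' : r ∈ Icc (0 : ℝ) ↑(⌈r⌉₊ + 1) := ⟨hr.1, by push_cast; linarith [Nat.le_ceil r]⟩
    rcases le_total (⌈r⌉₊ + 1) n with hle | hle
    · exact hαα _ n hle hr'
    · exact (hαα n _ hle hr).symm
  refine ⟨f, by simpa [f] using hα₀ 1, fun s hs => ?_⟩
  set n := ⌈s⌉₊ + 1
  have hsn : s < n := by push_cast [n]; linarith [Nat.le_ceil s]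
  have hmem : Icc (0 : ℝ) n ∈ nhdsWithin s (Ici 0) :=
    mem_nhdsWithin.mpr ⟨Iio n, isOpen_Iio, hsn, fun r hr => ⟨hr.2, hr.1.le⟩⟩
  have hfs : f s = α n s := hfα n ⟨hs, hsn.le⟩
  rw [hfs]
  exact ((hα n s ⟨hs, hsn.le⟩).mono_of_mem_nhdsWithin hmem).congr_of_eventuallyEq
    (Filter.mem_of_superset hmem (hfα n)) hfs

end ODE

theorem HasDerivWithinAt.complex_im {f : ℝ → ℂ} {f' : ℂ} {s : Set ℝ} {x : ℝ}
    (hf : HasDerivWithinAt f f' s x) : HasDerivWithinAt (fun r => (f r).im) f'.im s x :=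
  imCLM.hasFDerivAt.comp_hasDerivWithinAt x hf

namespace Complex

def clampIm (b : ℝ) (w : ℂ) : ℂ := ⟨w.re, max w.im b⟩

@[simp] lemma clampIm_re (b : ℝ) (w : ℂ) : (clampIm b w).re = w.re := rfl

@[simp] lemma clampIm_im (b : ℝ) (w : ℂ) : (clampIm b w).im = max w.im b := rfl

lemma clampIm_of_le {b : ℝ} {w : ℂ} (h : b ≤ w.im) : clampIm b w = w :=
  Complex.ext rfl (max_eq_left h)

lemma lipschitzWith_clampIm (b : ℝ) : LipschitzWith 1 (clampIm b) := by
  refine LipschitzWith.of_dist_le_mul fun w w' => ?_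
  have him : (max w.im b - max w'.im b) ^ 2 ≤ (w.im - w'.im) ^ 2 :=
    sq_le_sq.mpr (abs_max_sub_max_le_abs _ _ _)
  rw [NNReal.coe_one, one_mul, dist_eq_re_im, dist_eq_re_im]
  exact Real.sqrt_le_sqrt (by simpa using him)

lemma le_im_clampIm_sub_ofReal (b : ℝ) (w : ℂ) (x : ℝ) : b ≤ (clampIm b w - x).im := by
  simp

lemma im_neg_two_div_s12 (u : ℂ) : (-2 / u).im = 2 * u.im / normSq u := by
  simp only [div_im, neg_im, im_ofNat, neg_zero, zero_mul, zero_div, neg_re, re_ofNat, neg_mul,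
    zero_sub]
  ring

lemma norm_neg_two_div_le {b : ℝ} (hb : 0 < b) {u : ℂ} (hu : b ≤ u.im) : ‖-2 / u‖ ≤ 2 / b := by
  rw [norm_div, norm_neg, norm_ofNat]
  exact div_le_div_of_nonneg_left zero_le_two hb (hu.trans u.im_le_norm)

lemma lipschitzOnWith_neg_two_div {b : ℝ} (hb : 0 < b) :
    LipschitzOnWith (2 / b ^ 2).toNNReal (fun u : ℂ => -2 / u) {u | b ≤ u.im} := by
  refine LipschitzOnWith.of_dist_le_mul fun u hu u' hu' => ?_
  have hnu : b ≤ ‖u‖ := le_trans hu u.im_le_norm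
  have hnu' : b ≤ ‖u'‖ := le_trans hu' u'.im_le_norm
  have hu0 : u ≠ 0 := norm_pos_iff.mp (hb.trans_le hnu)
  have hu'0 : u' ≠ 0 := norm_pos_iff.mp (hb.trans_le hnu')
  have hdiff : -2 / u - -2 / u' = 2 * (u - u') / (u * u') := by field_simp; ring
  rw [dist_eq_norm, dist_eq_norm, hdiff, norm_div, norm_mul, norm_mul, norm_ofNat,
    Real.coe_toNNReal _ (by positivity), div_mul_eq_mul_div, sq]
  gcongr

end Complex

noncomputable def truncatedLoewnerField (V : ℝ → ℝ) (b t : ℝ) (w : ℂ) : ℂ :=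
  -2 / (clampIm b w - V t)

section truncatedLoewnerField

variable {V : ℝ → ℝ} {b : ℝ}

lemma truncatedLoewnerField_of_le {t : ℝ} {w : ℂ} (hw : b ≤ w.im) :
    truncatedLoewnerField V b t w = -2 / (w - V t) := by
  rw [truncatedLoewnerField, clampIm_of_le hw]

lemma lipschitzWith_truncatedLoewnerField (hb : 0 < b) (t : ℝ) :
    LipschitzWith (2 / b ^ 2).toNNReal (truncatedLoewnerField V b t) := by
  have hsub : LipschitzWith 1 (fun w => clampIm b w - V t) := by
    have := (IsometryEquiv.subRight (V t : ℂ)).isometry.lipschitz.comp (lipschitzWith_clampIm b)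
    rwa [mul_one] at this
  have := (lipschitzOnWith_neg_two_div hb).comp (hsub.lipschitzOnWith (s := univ))
    fun w _ => le_im_clampIm_sub_ofReal b w (V t)
  rwa [mul_one, lipschitzOnWith_univ] at this

lemma norm_truncatedLoewnerField_le (hb : 0 < b) (t : ℝ) (w : ℂ) :
    ‖truncatedLoewnerField V b t w‖ ≤ 2 / b :=
  norm_neg_two_div_le hb (le_im_clampIm_sub_ofReal b w (V t))

lemma continuousOn_truncatedLoewnerField (hV : ContinuousOn V (Ici 0)) (hb : 0 < b) (w : ℂ) :
    ContinuousOn (truncatedLoewnerField V b · w) (Ici 0) :=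
  continuousOn_const.div (continuousOn_const.sub (continuous_ofReal.comp_continuousOn hV))
    fun t _ hzero => by simpa [hzero] using (hb.trans_le (le_im_clampIm_sub_ofReal b w (V t)))

lemma im_truncatedLoewnerField_pos (hb : 0 < b) (t : ℝ) (w : ℂ) :
    0 < (truncatedLoewnerField V b t w).im := by
  have him := hb.trans_le (le_im_clampIm_sub_ofReal b w (V t))
  rw [truncatedLoewnerField, im_neg_two_div_s12]
  exact div_pos (by positivity) (normSq_pos.mpr fun hzero => by simp [hzero] at him)

end truncatedLoewnerField

def IsReverseLoewnerSolution (V : ℝ → ℝ) (z : ℂ) (h : ℝ → ℂ) : Prop :=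
  h 0 = z ∧ ∀ s ∈ Ici (0 : ℝ), h s - (V s : ℂ) ≠ 0 ∧
    HasDerivWithinAt h (-2 / (h s - (V s : ℂ))) (Ici 0) s

namespace IsReverseLoewnerSolution

variable {V : ℝ → ℝ} {z : ℂ} {h : ℝ → ℂ}

lemma hasDerivWithinAt_im (hh : IsReverseLoewnerSolution V z h) {s : ℝ} (hs : s ∈ Ici 0) :
    HasDerivWithinAt (fun r => (h r).im) (2 * (h s).im / normSq (h s - V s)) (Ici 0) s := by
  simpa [im_neg_two_div_s12] using (hh.2 s hs).2.complex_im

lemma im_le (hh : IsReverseLoewnerSolution V z h) (hz : 0 < z.im) :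
    ∀ s ∈ Ici (0 : ℝ), z.im ≤ (h s).im := by
  have hpos : ∀ s ∈ Ici (0 : ℝ), (h s).im = (h 0).im → 0 < 2 * (h s).im / normSq (h s - V s) :=
    fun s hs hs0 => div_pos (by rw [hs0, hh.1]; positivity) (normSq_pos.mpr (hh.2 s hs).1)
  simpa only [hh.1] using
    le_image_of_deriv_right_pos_of_eq_left (fun s hs => hh.hasDerivWithinAt_im hs) hpos

lemma monotoneOn_im (hh : IsReverseLoewnerSolution V z h) (hz : 0 < z.im) :
    MonotoneOn (fun s => (h s).im) (Ici 0) :=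
  monotoneOn_Ici_of_hasDerivWithinAt_nonneg (fun s hs => hh.hasDerivWithinAt_im hs)
    fun s hs => div_nonneg (by linarith [hh.im_le hz s (mem_Ici.mpr hs.le)]) (normSq_nonneg _)

lemma hasDerivWithinAt_truncatedLoewnerField (hh : IsReverseLoewnerSolution V z h)
    (hz : 0 < z.im) {s : ℝ} (hs : s ∈ Ici 0) :
    HasDerivWithinAt h (truncatedLoewnerField V z.im s (h s)) (Ici 0) s := by
  rw [truncatedLoewnerField_of_le (hh.im_le hz s hs)]
  exact (hh.2 s hs).2

lemma eqOn {h' : ℝ → ℂ} (hh : IsReverseLoewnerSolution V z h)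
    (hh' : IsReverseLoewnerSolution V z h') (hz : 0 < z.im) : EqOn h h' (Ici 0) :=
  eqOn_Ici_of_hasDerivWithinAt_of_lipschitzWith
    (fun t _ => lipschitzWith_truncatedLoewnerField hz t)
    (fun _ => hh.hasDerivWithinAt_truncatedLoewnerField hz)
    (fun _ => hh'.hasDerivWithinAt_truncatedLoewnerField hz) (hh.1.trans hh'.1.symm)

end IsReverseLoewnerSolution

theorem exists_isReverseLoewnerSolution {V : ℝ → ℝ} (hV : ContinuousOn V (Ici 0)) {z : ℂ}
    (hz : 0 < z.im) : ∃ h, IsReverseLoewnerSolution V z h := by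
  obtain ⟨h, h0, hd⟩ := exists_forall_mem_Ici_hasDerivWithinAt_of_lipschitzWith
    (fun t _ => lipschitzWith_truncatedLoewnerField hz t)
    (continuousOn_truncatedLoewnerField hV hz)
    (fun t _ w => (norm_truncatedLoewnerField_le hz t w).trans (Real.le_coe_toNNReal _)) z
  have hmono : MonotoneOn (fun s => (h s).im) (Ici 0) :=
    monotoneOn_Ici_of_hasDerivWithinAt_nonneg (fun s hs => (hd s hs).complex_im)
      fun s _ => (im_truncatedLoewnerField_pos hz s (h s)).le
  have hge : ∀ s ∈ Ici (0 : ℝ), z.im ≤ (h s).im := fun s hs => h0 ▸ hmono self_mem_Ici hs hs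
  refine ⟨h, h0, fun s hs => ⟨fun hzero => ?_, ?_⟩⟩
  · have := congrArg im hzero
    simp only [sub_im, ofReal_im, sub_zero, zero_im] at this
    linarith [hge s hs]
  · rw [← truncatedLoewnerField_of_le (hge s hs)]
    exact hd s hs

/-- **Global existence of the reverse Loewner flow started in the upper half-plane.**
For a continuous driver `V : [0,∞) → ℝ` and `z ∈ ℍ`, there is a unique solution
`h : [0,∞) → ℂ` of `h 0 = z`, `h' s = -2/(h s - V s)` (the solution never meets the
driver); moreover `s ↦ Im (h s)` is nondecreasing, so `Im (h s) ≥ Im z > 0`. -/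
theorem stmt12 (V : ℝ → ℝ) (hV : ContinuousOn V (Set.Ici 0)) (z : ℂ) (hz : 0 < z.im) :
    ∃ h : ℝ → ℂ,
      (h 0 = z ∧ ∀ s ∈ Set.Ici (0 : ℝ), h s - (V s : ℂ) ≠ 0 ∧
        HasDerivWithinAt h (-2 / (h s - (V s : ℂ))) (Set.Ici 0) s) ∧
      (∀ h' : ℝ → ℂ,
        (h' 0 = z ∧ ∀ s ∈ Set.Ici (0 : ℝ), h' s - (V s : ℂ) ≠ 0 ∧
          HasDerivWithinAt h' (-2 / (h' s - (V s : ℂ))) (Set.Ici 0) s) →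
        ∀ s ∈ Set.Ici (0 : ℝ), h' s = h s) ∧
      MonotoneOn (fun s => (h s).im) (Set.Ici 0) ∧
      ∀ s ∈ Set.Ici (0 : ℝ), z.im ≤ (h s).im := by
  obtain ⟨h, hh⟩ := exists_isReverseLoewnerSolution hV hz
  exact ⟨h, hh, fun h' hh' => IsReverseLoewnerSolution.eqOn hh' hh hz, hh.monotoneOn_im hz,
    hh.im_le hz⟩
end
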